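/- arXiv:2506.16329 — 2 statements merged into one kernel-verified Lean document; each statement's English description precedes it below -/
import Mathlib

section
/- Let A be an m × n matrix over ℝ, let π ∈ G(A) (i.e. there exists a row permutation σ with A_{σ(i), π(j)} = A_{i,j} for all i, j), and let k be a column index with k' = π(k). Then the map x ↦ x ∘ π (i.e. y_j = x_{π(j)}) is a bijection from the set {x ∈ {0,1}^n : A x ≤ e, x_{k'} = 1} onto the set {x ∈ {0,1}^n : A x ≤ e, x_k = 1} that preserves the objective value Σ_j x_j. Consequently, the optimal values of the two child subproblems obtained by fixing x_k = 1 and by fixing x_{k'} = 1 are equal. -/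
/-- For `π` in the symmetry group of `A` and a column index `k` with
`k' = π k`, the map `x ↦ x ∘ π` is an objective-preserving bijection from the
feasible 0–1 solutions with `x k' = 1` onto those with `x k = 1`; hence the two
child subproblems obtained by fixing `x k = 1` and `x k' = 1` have the same set
of attainable objective values. -/
theorem orbital_branching_children_equivalent
    {m n : ℕ} (A : Matrix (Fin m) (Fin n) ℝ)
    (π : Equiv.Perm (Fin n)) (σ : Equiv.Perm (Fin m))
    (hsym : ∀ i j, A (σ i) (π j) = A i j)
    (k k' : Fin n) (hk : k' = π k) :
    Set.BijOn (fun x : Fin n → ℝ => x ∘ π)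
      {x | (∀ j, x j = 0 ∨ x j = 1) ∧ (∀ i, ∑ j, A i j * x j ≤ 1) ∧ x k' = 1}
      {x | (∀ j, x j = 0 ∨ x j = 1) ∧ (∀ i, ∑ j, A i j * x j ≤ 1) ∧ x k = 1} ∧
    (∀ x : Fin n → ℝ, ∑ j, (x ∘ π) j = ∑ j, x j) ∧
    {v : ℝ | ∃ x : Fin n → ℝ, ((∀ j, x j = 0 ∨ x j = 1) ∧ (∀ i, ∑ j, A i j * x j ≤ 1) ∧
        x k' = 1) ∧ ∑ j, x j = v} =
      {v : ℝ | ∃ x : Fin n → ℝ, ((∀ j, x j = 0 ∨ x j = 1) ∧ (∀ i, ∑ j, A i j * x j ≤ 1) ∧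
        x k = 1) ∧ ∑ j, x j = v} := by
  have hsum : ∀ x : Fin n → ℝ, ∑ j, (x ∘ π) j = ∑ j, x j := fun x =>
    Equiv.sum_comp π x
  have hbij : Set.BijOn (fun x : Fin n → ℝ => x ∘ π)
      {x | (∀ j, x j = 0 ∨ x j = 1) ∧ (∀ i, ∑ j, A i j * x j ≤ 1) ∧ x k' = 1}
      {x | (∀ j, x j = 0 ∨ x j = 1) ∧ (∀ i, ∑ j, A i j * x j ≤ 1) ∧ x k = 1} := by
    constructor
    · rintro x ⟨h01, hfeas, hk'⟩
      refine ⟨fun j => h01 (π j), fun i => ?_, by simpa [hk] using hk'⟩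
      calc ∑ j, A i j * (x ∘ π) j = ∑ j, A (σ i) (π j) * x (π j) := by
            simp [hsym]
        _ = ∑ j, A (σ i) j * x j := Equiv.sum_comp π (fun j => A (σ i) j * x j)
        _ ≤ 1 := hfeas (σ i)
    constructor
    · intro x _ y _ h
      funext j
      have := congrFun h (π.symm j)
      simpa using this
    · rintro y ⟨h01, hfeas, hky⟩
      refine ⟨y ∘ π.symm, ⟨fun j => h01 (π.symm j), fun i => ?_, by simp [hk]; exact hky⟩, ?_⟩
      · calc ∑ j, A i j * (y ∘ π.symm) j
            = ∑ j, A i (π j) * y j := by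
              rw [← Equiv.sum_comp π (fun j => A i j * (y ∘ π.symm) j)]
              simp
          _ = ∑ j, A (σ.symm i) j * y j := by
              refine Finset.sum_congr rfl fun j _ => ?_
              rw [← hsym (σ.symm i) j]; simp
          _ ≤ 1 := hfeas (σ.symm i)
      · funext j; simp
  refine ⟨hbij, hsum, ?_⟩
  ext v
  constructor
  · rintro ⟨x, hx, hv⟩
    exact ⟨x ∘ π, hbij.mapsTo hx, by rw [hsum]; exact hv⟩
  · rintro ⟨y, hy, hv⟩
    obtain ⟨x, hx, hxy⟩ := hbij.surjOn hy
    exact ⟨x, hx, by rw [← hv, ← hxy]; exact (hsum x).symm⟩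
end

section
/- Let A be an m × n matrix over ℝ, let Γ be a subgroup of the symmetric group on column indices such that every π ∈ Γ lies in G(A) (i.e. admits a row permutation σ with A_{σ(i), π(j)} = A_{i,j} for all i, j), let k be a column index, and let O = {π(k) : π ∈ Γ} be the orbit of k under Γ. Then for every x ∈ {0,1}^n with A x ≤ e, either x_j = 0 for all j ∈ O, or there exists π ∈ Γ such that the vector y defined by y_j = x_{π(j)} satisfies y ∈ {0,1}^n, A y ≤ e, y_k = 1, and Σ_j y_j = Σ_j x_j. Hence the orbital branching dichotomy into the child fixing x_k = 1 and the child fixing x_j = 0 for all j ∈ O loses no objective values. -/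
/-- Orbital branching dichotomy: for any feasible 0–1 solution `x`, either `x`
vanishes on the whole orbit `O = {π k : π ∈ Γ}` of column `k`, or some group
element maps `x` to a feasible 0–1 solution of the same objective value having
value 1 at `k`. Hence branching into the child fixing `x k = 1` and the child
fixing `x j = 0` for all `j ∈ O` loses no objective values. -/
theorem orbital_branching_dichotomy
    {m n : ℕ} (A : Matrix (Fin m) (Fin n) ℝ)
    (Γ : Subgroup (Equiv.Perm (Fin n)))
    (hΓ : ∀ π ∈ Γ, ∃ σ : Equiv.Perm (Fin m), ∀ i j, A (σ i) (π j) = A i j)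
    (k : Fin n) :
    ∀ x : Fin n → ℝ,
      (∀ j, x j = 0 ∨ x j = 1) → (∀ i, ∑ j, A i j * x j ≤ 1) →
      (∀ j, (∃ π ∈ Γ, π k = j) → x j = 0) ∨
        ∃ π ∈ Γ,
          (∀ j, x (π j) = 0 ∨ x (π j) = 1) ∧
          (∀ i, ∑ j, A i j * x (π j) ≤ 1) ∧
          x (π k) = 1 ∧
          ∑ j, x (π j) = ∑ j, x j := by
  intro x hx hfeas
  by_cases h : ∀ j, (∃ π ∈ Γ, π k = j) → x j = 0
  · exact Or.inl h
  · right
    push_neg at h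
    obtain ⟨j, ⟨π, hπ, hπk⟩, hxj⟩ := h
    refine ⟨π, hπ, fun j' => hx _, ?_, ?_, ?_⟩
    · intro i
      obtain ⟨σ, hσ⟩ := hΓ π hπ
      calc ∑ j', A i j' * x (π j') = ∑ j', A (σ i) (π j') * x (π j') := by
            simp [hσ]
        _ = ∑ j', A (σ i) j' * x j' := Equiv.sum_comp π (fun j' => A (σ i) j' * x j')
        _ ≤ 1 := hfeas (σ i)
    · rcases hx (π k) with h0 | h1
      · exact absurd (hπk ▸ h0) hxj
      · exact h1
    · exact Equiv.sum_comp π x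
end
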